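/- arXiv:2210.13306 — 4 statements merged into one kernel-verified Lean document; each statement's English description precedes it below -/
import Mathlib

section
/- In an AM-space X (a Banach lattice whose norm satisfies ‖a ∨ b‖ = max{‖a‖, ‖b‖} for all a, b ≥ 0), for all x, y ∈ X and ε > 0, if ‖y + x‖ ≤ 1 + ε and ‖y − x‖ ≤ 1 + ε, then ‖y + |x|‖ ≤ 1 + ε. -/
theorem abs_sup_le_sup_abs {α : Type*} [AddCommGroup α] [Lattice α] [IsOrderedAddMonoid α]
    (a b : α) : |a ⊔ b| ≤ |a| ⊔ |b| := by
  refine abs_le'.2 ⟨sup_le_sup (le_abs_self a) (le_abs_self b), ?_⟩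
  rw [neg_sup]
  exact (inf_le_left.trans (neg_le_abs a)).trans le_sup_left

theorem norm_sup_le_max_of_isAM {X : Type*} [NormedAddCommGroup X] [Lattice X] [HasSolidNorm X]
    [IsOrderedAddMonoid X] (hAM : ∀ a b : X, 0 ≤ a → 0 ≤ b → ‖a ⊔ b‖ = max ‖a‖ ‖b‖) (a b : X) :
    ‖a ⊔ b‖ ≤ max ‖a‖ ‖b‖ := by
  have hsolid : ‖a ⊔ b‖ ≤ ‖|a| ⊔ |b|‖ := by
    apply HasSolidNorm.solid
    rw [abs_of_nonneg ((abs_nonneg a).trans le_sup_left)]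
    exact abs_sup_le_sup_abs a b
  rwa [hAM _ _ (abs_nonneg a) (abs_nonneg b), norm_abs_eq_norm, norm_abs_eq_norm] at hsolid

theorem add_abs_eq_add_sup_sub {α : Type*} [AddCommGroup α] [Lattice α] [IsOrderedAddMonoid α]
    (x y : α) : y + |x| = (y + x) ⊔ (y - x) := by
  rw [abs, sub_eq_add_neg, add_sup]

theorem stmt1_general {X : Type*} [NormedAddCommGroup X] [Lattice X] [HasSolidNorm X] [IsOrderedAddMonoid X]
    (hAM : ∀ a b : X, 0 ≤ a → 0 ≤ b → ‖a ⊔ b‖ = max ‖a‖ ‖b‖)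
    (x y : X) (ε : ℝ)
    (h₁ : ‖y + x‖ ≤ 1 + ε) (h₂ : ‖y - x‖ ≤ 1 + ε) :
    ‖y + |x|‖ ≤ 1 + ε := by
  rw [add_abs_eq_add_sup_sub]
  exact (norm_sup_le_max_of_isAM hAM _ _).trans (max_le h₁ h₂)

theorem stmt1 {X : Type*} [NormedAddCommGroup X] [Lattice X] [HasSolidNorm X] [IsOrderedAddMonoid X] [NormedSpace ℝ X] [CompleteSpace X]
    (hAM : ∀ a b : X, 0 ≤ a → 0 ≤ b → ‖a ⊔ b‖ = max ‖a‖ ‖b‖)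
    (x y : X) (ε : ℝ) (hε : 0 < ε)
    (h₁ : ‖y + x‖ ≤ 1 + ε) (h₂ : ‖y - x‖ ≤ 1 + ε) :
    ‖y + |x|‖ ≤ 1 + ε :=
  stmt1_general hAM x y ε h₁ h₂
end

section
/- Let X be a Banach lattice. X is positively locally almost square if and only if for every y ≥ 0 with ‖y‖ = 1 and every ε > 0 there exists x ≥ 0 with ‖x‖ = 1 and ‖y + x‖ ≤ 1 + ε. -/
/-!
For `x ≥ 0` the lattice inequality `|y ± x| ≤ |y| + x` and solidity of the norm give
`‖y ± x‖ ≤ ‖|y| + x‖`, so a positive `x` that works for the positive unit vector `|y|`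
works for `y` as well.
-/

section SolidNorm

variable {X : Type*} [NormedAddCommGroup X] [Lattice X] [IsOrderedAddMonoid X] [HasSolidNorm X]

theorem norm_add_le_norm_abs_add_of_nonneg (y : X) {x : X} (hx : 0 ≤ x) :
    ‖y + x‖ ≤ ‖|y| + x‖ := by
  apply norm_le_norm_of_abs_le_abs
  rw [abs_of_nonneg (add_nonneg (abs_nonneg y) hx)]
  simpa only [abs_of_nonneg hx] using abs_add_le y x

theorem norm_sub_le_norm_abs_add_of_nonneg (y : X) {x : X} (hx : 0 ≤ x) :
    ‖y - x‖ ≤ ‖|y| + x‖ := by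
  simpa only [← norm_neg (y - x), neg_sub', sub_neg_eq_add, abs_neg] using
    norm_add_le_norm_abs_add_of_nonneg (-y) hx

end SolidNorm

theorem stmt3_general {X : Type*} [NormedAddCommGroup X] [Lattice X] [IsOrderedAddMonoid X] [HasSolidNorm X] :
    (∀ y : X, ‖y‖ = 1 → ∀ ε : ℝ, 0 < ε →
      ∃ x : X, 0 ≤ x ∧ ‖x‖ = 1 ∧ ‖y + x‖ ≤ 1 + ε ∧ ‖y - x‖ ≤ 1 + ε) ↔
    (∀ y : X, 0 ≤ y → ‖y‖ = 1 → ∀ ε : ℝ, 0 < ε →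
      ∃ x : X, 0 ≤ x ∧ ‖x‖ = 1 ∧ ‖y + x‖ ≤ 1 + ε) := by
  constructor
  · intro h y _ hy ε hε
    obtain ⟨x, hx0, hx1, hadd, -⟩ := h y hy ε hε
    exact ⟨x, hx0, hx1, hadd⟩
  · intro h y hy ε hε
    obtain ⟨x, hx0, hx1, hadd⟩ :=
      h |y| (abs_nonneg y) ((norm_abs_eq_norm y).trans hy) ε hε
    exact ⟨x, hx0, hx1, (norm_add_le_norm_abs_add_of_nonneg y hx0).trans hadd,
      (norm_sub_le_norm_abs_add_of_nonneg y hx0).trans hadd⟩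

theorem stmt3 {X : Type*} [NormedAddCommGroup X] [Lattice X] [IsOrderedAddMonoid X] [HasSolidNorm X] [NormedSpace ℝ X] [CompleteSpace X] :
    (∀ y : X, ‖y‖ = 1 → ∀ ε : ℝ, 0 < ε →
      ∃ x : X, 0 ≤ x ∧ ‖x‖ = 1 ∧ ‖y + x‖ ≤ 1 + ε ∧ ‖y - x‖ ≤ 1 + ε) ↔
    (∀ y : X, 0 ≤ y → ‖y‖ = 1 → ∀ ε : ℝ, 0 < ε →
      ∃ x : X, 0 ≤ x ∧ ‖x‖ = 1 ∧ ‖y + x‖ ≤ 1 + ε) :=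
  stmt3_general
end

section
/- Let X be a Banach lattice that is positively locally almost square. Then for every y with ‖y‖ = 1 there exists a net (x_α) in X which converges weakly to 0 and satisfies lim ‖x_α‖ = 1 and lim ‖y + x_α‖ = 1 and lim ‖y − x_α‖ = 1. -/
/-!
Applying LASQ+ to the normalisation of `|y| + w₁ + ⋯ + wₖ` produces a new positive unit vector
`wₖ₊₁` that raises the norm of the sum by as little as we like. So for every `n` there are
positive unit vectors `w₁, …, wₙ` with `‖|y| + ∑ wᵢ‖ ≤ 1 + δ`, and since `|y ± wᵢ| ≤ |y| + ∑ wⱼ`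
each `wᵢ` is almost square with `y`. Positivity gives `∑ |f wᵢ| ≤ ‖f‖ ‖∑ wᵢ‖ ≤ 2 ‖f‖` for every
functional `f`, so for finitely many functionals some `wᵢ` makes all of them `O(1/n)`; letting
`n → ∞` and the set of functionals grow yields the weakly null net.
-/

open Filter Topology Finset

theorem Filter.exists_neBot_forall_tendsto_zero {ι J : Type*} (g : J → ι → ℝ)
    (h : ∀ (F : Finset J) (ε : ℝ), 0 < ε → ∃ i, ∀ j ∈ F, |g j i| ≤ ε) :
    ∃ l : Filter ι, l.NeBot ∧ ∀ j, Tendsto (g j) l (𝓝 0) := by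
  classical
  have : Nonempty ι := (h ∅ 1 one_pos).nonempty
  let T : Finset J × ℕ → Set ι := fun q => {i | ∀ j ∈ q.1, |g j i| ≤ 1 / (q.2 + 1)}
  have hT_mono : ∀ {F F' : Finset J} {n n' : ℕ}, F ⊆ F' → n ≤ n' → T (F', n') ⊆ T (F, n) :=
    fun hF hn i hi j hj => (hi j (hF hj)).trans (Nat.one_div_le_one_div hn)
  refine ⟨⨅ q, 𝓟 (T q), iInf_neBot_of_directed ?_ fun q => principal_neBot_iff.2 ?_, fun j => ?_⟩
  · rintro ⟨F₁, n₁⟩ ⟨F₂, n₂⟩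
    exact ⟨(F₁ ∪ F₂, max n₁ n₂), principal_mono.2 (hT_mono subset_union_left (le_max_left _ _)),
      principal_mono.2 (hT_mono subset_union_right (le_max_right _ _))⟩
  · exact h q.1 _ (by positivity)
  · refine Metric.tendsto_nhds.2 fun ε hε => ?_
    obtain ⟨n, hn⟩ := exists_nat_one_div_lt hε
    filter_upwards [mem_iInf_of_mem ({j}, n) (mem_principal_self _)] with i hi
    simpa using (hi j (mem_singleton_self j)).trans_lt hn

theorem abs_norm_add_sub_norm_le {E : Type*} [SeminormedAddCommGroup E] [NormedSpace ℝ E]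
    {y x : E} {δ : ℝ} (hp : ‖y + x‖ ≤ ‖y‖ + δ) (hm : ‖y - x‖ ≤ ‖y‖ + δ) :
    |‖y + x‖ - ‖y‖| ≤ δ ∧ |‖y - x‖ - ‖y‖| ≤ δ := by
  have h2 : ‖(2 : ℝ) • y‖ ≤ ‖y + x‖ + ‖y - x‖ := by
    rw [two_smul]
    exact (norm_add_le _ _).trans_eq' (by congr 1; abel)
  rw [norm_smul, Real.norm_two] at h2
  constructor <;> rw [abs_sub_le_iff] <;> constructor <;> linarith

def PosLocallyAlmostSquare (X : Type*) [NormedAddCommGroup X] [Lattice X] : Prop :=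
  ∀ y : X, ‖y‖ = 1 → ∀ ε : ℝ, 0 < ε →
    ∃ x : X, 0 ≤ x ∧ ‖x‖ = 1 ∧ ‖y + x‖ ≤ 1 + ε ∧ ‖y - x‖ ≤ 1 + ε

section LocallyAlmostSquare

variable {X : Type*} [NormedAddCommGroup X] [Lattice X] [NormedSpace ℝ X]

theorem PosLocallyAlmostSquare.exists_nonneg_norm_add_le (hX : PosLocallyAlmostSquare X)
    {u : X} (hu : 1 ≤ ‖u‖) {η : ℝ} (hη : 0 < η) :
    ∃ z : X, 0 ≤ z ∧ ‖z‖ = 1 ∧ ‖u + z‖ ≤ 2 * ‖u‖ - 1 + η := by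
  have hu₀ : 0 < ‖u‖ := one_pos.trans_le hu
  obtain ⟨z, hz₀, hz₁, hz, -⟩ := hX (‖u‖⁻¹ • u)
    (by rw [norm_smul, norm_inv, norm_norm, inv_mul_cancel₀ hu₀.ne']) (η / ‖u‖) (by positivity)
  refine ⟨z, hz₀, hz₁, ?_⟩
  have hsplit : u + z = ‖u‖ • (‖u‖⁻¹ • u + z) - (‖u‖ - 1) • z := by
    rw [smul_add, smul_inv_smul₀ hu₀.ne', sub_smul, one_smul]; abel
  calc ‖u + z‖ ≤ ‖‖u‖ • (‖u‖⁻¹ • u + z)‖ + ‖(‖u‖ - 1) • z‖ := hsplit ▸ norm_sub_le _ _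
    _ = ‖u‖ * ‖‖u‖⁻¹ • u + z‖ + (‖u‖ - 1) * ‖z‖ := by
        rw [norm_smul, norm_smul, norm_norm, Real.norm_of_nonneg (sub_nonneg.2 hu)]
    _ ≤ ‖u‖ * (1 + η / ‖u‖) + (‖u‖ - 1) * 1 := by rw [hz₁]; gcongr
    _ = 2 * ‖u‖ - 1 + η := by field_simp; ring

end LocallyAlmostSquare

section BanachLattice

variable {X : Type*} [NormedAddCommGroup X] [Lattice X] [IsOrderedAddMonoid X] [HasSolidNorm X]

theorem HasSolidNorm.norm_le_norm_of_nonneg_of_le {a b : X} (ha : 0 ≤ a) (hab : a ≤ b) :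
    ‖a‖ ≤ ‖b‖ :=
  norm_le_norm_of_abs_le_abs <| by rwa [abs_of_nonneg ha, abs_of_nonneg (ha.trans hab)]

theorem norm_add_le_norm_abs_add {y z s : X} (hz : 0 ≤ z) (hzs : z ≤ s) :
    ‖y + z‖ ≤ ‖|y| + s‖ ∧ ‖y - z‖ ≤ ‖|y| + s‖ := by
  have hs : |y| + s = |(|y| + s)| := (abs_of_nonneg (add_nonneg (abs_nonneg y) (hz.trans hzs))).symm
  have hz' : |y| + |z| ≤ |y| + s := by rw [abs_of_nonneg hz]; gcongr
  refine ⟨norm_le_norm_of_abs_le_abs ?_, norm_le_norm_of_abs_le_abs ?_⟩ <;> rw [← hs]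
  · exact (abs_add_le y z).trans hz'
  · rw [sub_eq_add_neg]
    exact (abs_add_le y (-z)).trans (by rwa [abs_neg])

variable [NormedSpace ℝ X]

theorem sum_abs_apply_le (f : X →L[ℝ] ℝ) {ι : Type*} (s : Finset ι) {w : ι → X}
    (hw : ∀ i ∈ s, 0 ≤ w i) : ∑ i ∈ s, |f (w i)| ≤ ‖f‖ * ‖∑ i ∈ s, w i‖ := by
  classical
  set t := ∑ i ∈ s, if 0 ≤ f (w i) then w i else -w i
  have hft : f t = ∑ i ∈ s, |f (w i)| := by
    rw [map_sum]
    refine sum_congr rfl fun i _ => ?_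
    split_ifs with h
    · exact (abs_of_nonneg h).symm
    · rw [map_neg, abs_of_neg (not_le.1 h)]
  have ht : |t| ≤ |∑ i ∈ s, w i| := by
    rw [abs_of_nonneg (sum_nonneg hw), abs_le', ← sum_neg_distrib]
    constructor <;> refine sum_le_sum fun i hi => ?_
    all_goals
      have hnw : -w i ≤ w i := (neg_nonpos.2 (hw i hi)).trans (hw i hi)
      split_ifs <;> simp only [neg_neg, le_refl, hnw]
  calc ∑ i ∈ s, |f (w i)| = f t := hft.symm
    _ ≤ ‖f t‖ := le_abs_self _
    _ ≤ ‖f‖ * ‖t‖ := f.le_opNorm t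
    _ ≤ ‖f‖ * ‖∑ i ∈ s, w i‖ := by gcongr; exact norm_le_norm_of_abs_le_abs ht

theorem PosLocallyAlmostSquare.exists_nonneg_norm_add_sum_le (hX : PosLocallyAlmostSquare X)
    {u : X} (hu₀ : 0 ≤ u) (hu₁ : ‖u‖ = 1) (n : ℕ) {ε : ℝ} (hε : 0 < ε) :
    ∃ w : Fin n → X, (∀ i, 0 ≤ w i) ∧ (∀ i, ‖w i‖ = 1) ∧ ‖u + ∑ i, w i‖ ≤ 1 + ε := by
  induction n generalizing ε with
  | zero => exact ⟨Fin.elim0, (·.elim0), (·.elim0), by simp [hu₁, hε.le]⟩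
  | succ n ih =>
    obtain ⟨w, hw₀, hw₁, hw⟩ := ih (ε := ε / 3) (by positivity)
    have hv : 1 ≤ ‖u + ∑ i, w i‖ := hu₁ ▸ HasSolidNorm.norm_le_norm_of_nonneg_of_le hu₀
      (le_add_of_nonneg_right (sum_nonneg fun i _ => hw₀ i))
    obtain ⟨z, hz₀, hz₁, hz⟩ := hX.exists_nonneg_norm_add_le hv (η := ε / 3) (by positivity)
    refine ⟨Fin.cons z w, Fin.forall_fin_succ.2 ⟨hz₀, hw₀⟩, Fin.forall_fin_succ.2 ⟨hz₁, hw₁⟩, ?_⟩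
    rw [Fin.sum_cons, add_left_comm, add_comm z]
    linarith

theorem exists_forall_abs_apply_le {n : ℕ} (w : Fin (n + 1) → X) (hw : ∀ i, 0 ≤ w i)
    (F : Finset (X →L[ℝ] ℝ)) :
    ∃ i, ∀ f ∈ F, (n + 1) * |f (w i)| ≤ (∑ f ∈ F, ‖f‖) * ‖∑ i, w i‖ := by
  have hsum : ∑ i, ∑ f ∈ F, |f (w i)| ≤
      ∑ _i : Fin (n + 1), (∑ f ∈ F, ‖f‖) * ‖∑ i, w i‖ / (n + 1) := by
    rw [sum_comm, sum_const, card_univ, Fintype.card_fin, nsmul_eq_mul, sum_mul]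
    push_cast
    rw [mul_div_cancel₀ _ (by positivity)]
    exact sum_le_sum fun f _ => sum_abs_apply_le f univ fun i _ => hw i
  obtain ⟨i, -, hi⟩ := exists_le_of_sum_le univ_nonempty hsum
  refine ⟨i, fun f hf => ?_⟩
  rw [← le_div_iff₀' (by positivity)]
  exact (single_le_sum (fun f _ => abs_nonneg (f (w i))) hf).trans hi

theorem exists_abs_apply_le_of_forall_norm_sum_le (W : ∀ n : ℕ, Fin (n + 1) → X)
    (hW₀ : ∀ n i, 0 ≤ W n i) {C : ℝ} (hW : ∀ n, ‖∑ i, W n i‖ ≤ C) (F : Finset (X →L[ℝ] ℝ))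
    {ε : ℝ} (hε : 0 < ε) :
    ∃ (n : ℕ) (i : Fin (n + 1)), ((n : ℝ) + 1)⁻¹ ≤ ε ∧ ∀ f ∈ F, |f (W n i)| ≤ ε := by
  set A := (∑ f ∈ F, ‖f‖) * C
  have hA : 0 ≤ A := mul_nonneg (sum_nonneg fun f _ => norm_nonneg f) ((norm_nonneg _).trans (hW 0))
  obtain ⟨n, hn⟩ := exists_nat_ge ((A + 1) / ε)
  have hnε : A + 1 ≤ n * ε := (div_le_iff₀ hε).1 hn
  obtain ⟨i, hi⟩ := exists_forall_abs_apply_le (W n) (hW₀ n) F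
  refine ⟨n, i, inv_le_of_inv_le₀ hε ?_, fun f hf => ?_⟩
  · rw [inv_le_iff_one_le_mul₀ hε]; nlinarith
  · have : (n + 1) * |f (W n i)| ≤ (n + 1) * ε := calc
        _ ≤ (∑ f ∈ F, ‖f‖) * ‖∑ i, W n i‖ := hi f hf
        _ ≤ A := mul_le_mul_of_nonneg_left (hW n) (by positivity)
        _ ≤ (n + 1) * ε := by nlinarith
    exact le_of_mul_le_mul_left this (by positivity)

theorem PosLocallyAlmostSquare.exists_almostSquare_nonneg_family (hX : PosLocallyAlmostSquare X)
    {y : X} (hy : ‖y‖ = 1) (n : ℕ) {δ : ℝ} (hδ : 0 < δ) :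
    ∃ w : Fin n → X, (∀ i, 0 ≤ w i) ∧ (∀ i, ‖w i‖ = 1) ∧ ‖∑ i, w i‖ ≤ 1 + δ ∧
      ∀ i, |‖y + w i‖ - 1| ≤ δ ∧ |‖y - w i‖ - 1| ≤ δ := by
  obtain ⟨w, hw₀, hw₁, hw⟩ := hX.exists_nonneg_norm_add_sum_le (abs_nonneg y)
    ((norm_abs_eq_norm y).trans hy) n hδ
  have hsum₀ : 0 ≤ ∑ i, w i := sum_nonneg fun i _ => hw₀ i
  refine ⟨w, hw₀, hw₁, (HasSolidNorm.norm_le_norm_of_nonneg_of_le hsum₀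
    (le_add_of_nonneg_left (abs_nonneg y))).trans hw, fun i => ?_⟩
  obtain ⟨hp, hm⟩ := norm_add_le_norm_abs_add (y := y) (hw₀ i)
    (single_le_sum (fun j _ => hw₀ j) (mem_univ i))
  rw [← hy]
  exact abs_norm_add_sub_norm_le (by linarith) (by linarith)

end BanachLattice

theorem stmt9_general {X : Type*} [NormedAddCommGroup X] [Lattice X] [IsOrderedAddMonoid X] [HasSolidNorm X] [NormedSpace ℝ X]
    (hLASQplus : ∀ y : X, ‖y‖ = 1 → ∀ ε : ℝ, 0 < ε →
      ∃ x : X, 0 ≤ x ∧ ‖x‖ = 1 ∧ ‖y + x‖ ≤ 1 + ε ∧ ‖y - x‖ ≤ 1 + ε) :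
    ∀ y : X, ‖y‖ = 1 →
      ∃ (ι : Type) (l : Filter ι) (x : ι → X), l.NeBot ∧
        (∀ f : X →L[ℝ] ℝ, Filter.Tendsto (fun α => f (x α)) l (nhds 0)) ∧
        Filter.Tendsto (fun α => ‖x α‖) l (nhds 1) ∧
        Filter.Tendsto (fun α => ‖y + x α‖) l (nhds 1) ∧
        Filter.Tendsto (fun α => ‖y - x α‖) l (nhds 1) := by
  intro y hy
  choose W hW₀ hW₁ hWsum hWerr using fun n : ℕ =>
    PosLocallyAlmostSquare.exists_almostSquare_nonneg_family hLASQplus hy (n + 1)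
      (δ := (n + 1 : ℝ)⁻¹) (by positivity)
  have hsum : ∀ n, ‖∑ i, W n i‖ ≤ 2 := fun n =>
    (hWsum n).trans (by linarith [inv_le_one_of_one_le₀ (by simp : (1 : ℝ) ≤ n + 1)])
  -- The index type has to live in `Type`, so the net runs through the blocks `W n`, not through
  -- weak neighbourhoods of `0` in `X`; the coordinate `none` forces `n → ∞`.
  let x : (Σ n : ℕ, Fin (n + 1)) → X := fun p => W p.1 p.2
  obtain ⟨l, hl, hlim⟩ := exists_neBot_forall_tendsto_zero
    (fun (j : Option (X →L[ℝ] ℝ)) p => j.elim ((p.1 + 1 : ℝ)⁻¹) fun f => f (x p)) <| by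
      intro F ε hε
      obtain ⟨n, i, hn, hi⟩ := exists_abs_apply_le_of_forall_norm_sum_le W hW₀ hsum F.eraseNone hε
      refine ⟨⟨n, i⟩, ?_⟩
      rintro (_ | f) hf
      · rwa [Option.elim_none, abs_of_pos (by positivity)]
      · exact hi f (mem_eraseNone.2 hf)
  have htendsto : ∀ a : (Σ n : ℕ, Fin (n + 1)) → ℝ, (∀ p, |a p - 1| ≤ (p.1 + 1 : ℝ)⁻¹) →
      Tendsto a l (𝓝 1) := fun a ha =>
    tendsto_iff_norm_sub_tendsto_zero.2 (squeeze_zero (fun _ => norm_nonneg _) ha (hlim none))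
  exact ⟨_, l, x, hl, fun f => hlim (some f), by simp [x, hW₁],
    htendsto _ fun p => (hWerr p.1 p.2).1, htendsto _ fun p => (hWerr p.1 p.2).2⟩

theorem stmt9 {X : Type*} [NormedAddCommGroup X] [Lattice X] [IsOrderedAddMonoid X] [HasSolidNorm X] [NormedSpace ℝ X] [CompleteSpace X]
    (hLASQplus : ∀ y : X, ‖y‖ = 1 → ∀ ε : ℝ, 0 < ε →
      ∃ x : X, 0 ≤ x ∧ ‖x‖ = 1 ∧ ‖y + x‖ ≤ 1 + ε ∧ ‖y - x‖ ≤ 1 + ε) :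
    ∀ y : X, ‖y‖ = 1 →
      ∃ (ι : Type) (l : Filter ι) (x : ι → X), l.NeBot ∧
        (∀ f : X →L[ℝ] ℝ, Filter.Tendsto (fun α => f (x α)) l (nhds 0)) ∧
        Filter.Tendsto (fun α => ‖x α‖) l (nhds 1) ∧
        Filter.Tendsto (fun α => ‖y + x α‖) l (nhds 1) ∧
        Filter.Tendsto (fun α => ‖y - x α‖) l (nhds 1) :=
  stmt9_general hLASQplus
end

section
/- If a Banach lattice X is positively locally almost square and 𝓕 is a non-principal ultrafilter on ℕ, then the ultrapower X^𝓕 (with the positive cone of elements admitting coordinatewise positive representatives) is positively locally almost square. -/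
/-!
Given a bounded representative `(y n)` of a norm-one element of the ultrapower, apply LASQ+ in `X`
to the normalised coordinates `y n / ‖y n‖`. Moving back from `y n / ‖y n‖` to `y n` costs at
most `|‖y n‖ - 1|`, which tends to `0` along the ultrafilter, and every bounded real sequence
converges along an ultrafilter, so the coordinatewise companions `(x n)` represent a positive
norm-one element `x` with `‖y ± x‖ ≤ 1 + ε`.
-/

open Filter Topology NormedSpace

def IsPositivelyLASQ (X : Type*) [SeminormedAddCommGroup X] [LE X] : Prop :=
  ∀ y : X, ‖y‖ = 1 → ∀ ε : ℝ, 0 < ε →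
    ∃ x : X, 0 ≤ x ∧ ‖x‖ = 1 ∧ ‖y + x‖ ≤ 1 + ε ∧ ‖y - x‖ ≤ 1 + ε

lemma Ultrafilter.exists_tendsto_of_mem_Icc {α : Type*} (F : Ultrafilter α) {u : α → ℝ}
    {m M : ℝ} (hu : ∀ a, u a ∈ Set.Icc m M) : ∃ L, Tendsto u F (𝓝 L) := by
  obtain ⟨L, -, hL⟩ := isCompact_Icc.ultrafilter_le_nhds (F.map u)
    (le_principal_iff.2 (mem_map.2 (univ_mem' hu)))
  exact ⟨L, hL⟩

lemma Ultrafilter.exists_tendsto_le_of_eventually_le {α : Type*} (F : Ultrafilter α)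
    {u v : α → ℝ} {m M b : ℝ} (hu : ∀ a, u a ∈ Set.Icc m M) (huv : ∀ᶠ a in F, u a ≤ v a)
    (hv : Tendsto v F (𝓝 b)) : ∃ L ≤ b, Tendsto u F (𝓝 L) := by
  obtain ⟨L, hL⟩ := F.exists_tendsto_of_mem_Icc hu
  exact ⟨L, le_of_tendsto_of_tendsto hL hv huv, hL⟩

lemma NormedSpace.norm_sub_normalize {V : Type*} [NormedAddCommGroup V] [NormedSpace ℝ V]
    {y : V} (hy : y ≠ 0) : ‖y - normalize y‖ = dist ‖y‖ 1 := by
  have : y - normalize y = (‖y‖ - 1) • normalize y := by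
    rw [sub_smul, one_smul, norm_smul_normalize]
  rw [this, norm_smul, norm_normalize hy, mul_one, Real.dist_eq, Real.norm_eq_abs]

lemma IsPositivelyLASQ.exists_nonneg_of_dist_norm_one {X : Type*} [NormedAddCommGroup X]
    [NormedSpace ℝ X] [Preorder X] (hX : IsPositivelyLASQ X) (y : X) {ε : ℝ} (hε : 0 < ε) :
    ∃ x : X, 0 ≤ x ∧ ‖x‖ ≤ 1 ∧ dist ‖x‖ 1 ≤ dist ‖y‖ 1 ∧
      ‖y + x‖ ≤ 1 + ε + dist ‖y‖ 1 ∧ ‖y - x‖ ≤ 1 + ε + dist ‖y‖ 1 := by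
  rcases eq_or_ne y 0 with rfl | hy
  · exact ⟨0, le_rfl, by simp, by simp, by simp; positivity, by simp; positivity⟩
  obtain ⟨x, hx0, hx1, hadd, hsub⟩ := hX _ (norm_normalize hy) ε hε
  have hy' : ‖y - normalize y‖ = dist ‖y‖ 1 := norm_sub_normalize hy
  refine ⟨x, hx0, hx1.le, by simp [hx1], ?_, ?_⟩
  · calc ‖y + x‖ = ‖(normalize y + x) + (y - normalize y)‖ := by abel_nf
      _ ≤ 1 + ε + dist ‖y‖ 1 := (norm_add_le _ _).trans (by rw [hy']; linarith)
  · calc ‖y - x‖ = ‖(normalize y - x) + (y - normalize y)‖ := by abel_nf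
      _ ≤ 1 + ε + dist ‖y‖ 1 := (norm_add_le _ _).trans (by rw [hy']; linarith)

theorem stmt14_general {X : Type*} [NormedAddCommGroup X] [Lattice X] [NormedSpace ℝ X]
    (F : Ultrafilter ℕ)
    (hLASQplus : ∀ y : X, ‖y‖ = 1 → ∀ ε : ℝ, 0 < ε →
      ∃ x : X, 0 ≤ x ∧ ‖x‖ = 1 ∧ ‖y + x‖ ≤ 1 + ε ∧ ‖y - x‖ ≤ 1 + ε) :
    -- LASQ+ for the ultrapower `X^F`, stated via representatives: an element of the
    -- ultrapower is (the class of) a bounded sequence, its norm is the limit of the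
    -- coordinate norms along `F`, and it is positive iff it admits a coordinatewise
    -- positive representative.
    ∀ y : ℕ → X, (∃ C : ℝ, ∀ n, ‖y n‖ ≤ C) →
      Filter.Tendsto (fun n => ‖y n‖) F (nhds 1) →
      ∀ ε : ℝ, 0 < ε →
        ∃ x : ℕ → X, (∃ C : ℝ, ∀ n, ‖x n‖ ≤ C) ∧ (∀ n, 0 ≤ x n) ∧
          Filter.Tendsto (fun n => ‖x n‖) F (nhds 1) ∧
          (∃ L₁ : ℝ, L₁ ≤ 1 + ε ∧ Filter.Tendsto (fun n => ‖y n + x n‖) F (nhds L₁)) ∧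
          (∃ L₂ : ℝ, L₂ ≤ 1 + ε ∧ Filter.Tendsto (fun n => ‖y n - x n‖) F (nhds L₂)) := by
  intro y ⟨C, hC⟩ hy ε hε
  choose x hx0 hx1 hxdist hadd hsub using fun n =>
    IsPositivelyLASQ.exists_nonneg_of_dist_norm_one hLASQplus (y n) (half_pos hε)
  have hdist : Tendsto (fun n => dist ‖y n‖ 1) F (𝓝 0) := tendsto_iff_dist_tendsto_zero.1 hy
  have hbound : Tendsto (fun n => 1 + ε / 2 + dist ‖y n‖ 1) F (𝓝 (1 + ε / 2)) := by
    simpa using tendsto_const_nhds.add hdist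
  have hε' : 1 + ε / 2 ≤ 1 + ε := by linarith
  refine ⟨x, ⟨1, hx1⟩, hx0, ?_, ?_, ?_⟩
  · exact tendsto_iff_dist_tendsto_zero.2
      (squeeze_zero (fun _ => dist_nonneg) hxdist hdist)
  · obtain ⟨L, hL, hlim⟩ := F.exists_tendsto_le_of_eventually_le
      (fun n => ⟨norm_nonneg _, (norm_add_le _ _).trans (add_le_add (hC n) (hx1 n))⟩)
      (Eventually.of_forall hadd) hbound
    exact ⟨L, hL.trans hε', hlim⟩
  · obtain ⟨L, hL, hlim⟩ := F.exists_tendsto_le_of_eventually_le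
      (fun n => ⟨norm_nonneg _, (norm_sub_le _ _).trans (add_le_add (hC n) (hx1 n))⟩)
      (Eventually.of_forall hsub) hbound
    exact ⟨L, hL.trans hε', hlim⟩

theorem stmt14 {X : Type*} [NormedAddCommGroup X] [Lattice X] [IsOrderedAddMonoid X] [HasSolidNorm X] [NormedSpace ℝ X] [CompleteSpace X]
    (F : Ultrafilter ℕ) (hF : (F : Filter ℕ) ≤ Filter.cofinite)
    (hLASQplus : ∀ y : X, ‖y‖ = 1 → ∀ ε : ℝ, 0 < ε →
      ∃ x : X, 0 ≤ x ∧ ‖x‖ = 1 ∧ ‖y + x‖ ≤ 1 + ε ∧ ‖y - x‖ ≤ 1 + ε) :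
    -- LASQ+ for the ultrapower `X^F`, stated via representatives: an element of the
    -- ultrapower is (the class of) a bounded sequence, its norm is the limit of the
    -- coordinate norms along `F`, and it is positive iff it admits a coordinatewise
    -- positive representative.
    ∀ y : ℕ → X, (∃ C : ℝ, ∀ n, ‖y n‖ ≤ C) →
      Filter.Tendsto (fun n => ‖y n‖) F (nhds 1) →
      ∀ ε : ℝ, 0 < ε →
        ∃ x : ℕ → X, (∃ C : ℝ, ∀ n, ‖x n‖ ≤ C) ∧ (∀ n, 0 ≤ x n) ∧
          Filter.Tendsto (fun n => ‖x n‖) F (nhds 1) ∧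
          (∃ L₁ : ℝ, L₁ ≤ 1 + ε ∧ Filter.Tendsto (fun n => ‖y n + x n‖) F (nhds L₁)) ∧
          (∃ L₂ : ℝ, L₂ ≤ 1 + ε ∧ Filter.Tendsto (fun n => ‖y n - x n‖) F (nhds L₂)) :=
  stmt14_general F hLASQplus
end
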